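/- In an objective partial group (L, Δ), for each object X ∈ Δ the set N_L(X) = {g ∈ L : X^g = X} is a subgroup of L (i.e. a partial subgroup with W(N_L(X)) ⊆ D). -/

import Mathlib

/-!
By (O1), a word all of whose letters normalize `X` lies in `D`: the constant chain `X, X, …`
witnesses it. Since `X` is a subgroup it normalizes itself, so for such a word `w` and `x ∈ X`
the word `w⁻¹ x w` lies in `D`; contracting it from the middle outwards keeps the middle
entry in `X`, whence `X^{Π w} ⊆ X`. The same for the inverse word gives `X^{(Π w)⁻¹} ⊆ X`,
and the two inclusions together say `Π w ∈ N_L(X)`.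
-/

universe u

structure PartialGroupOn (L : Type u) : Type u where
  nonempty : Nonempty L
  D : Set (List L)
  Pi : List L → L
  inv : L → L
  mem_single : ∀ x : L, [x] ∈ D
  mem_append_left : ∀ u v : List L, u ++ v ∈ D → u ∈ D
  mem_append_right : ∀ u v : List L, u ++ v ∈ D → v ∈ D
  Pi_single : ∀ x : L, Pi [x] = x
  mem_assoc : ∀ u v w : List L, u ++ v ++ w ∈ D → u ++ [Pi v] ++ w ∈ D
  Pi_assoc : ∀ u v w : List L, u ++ v ++ w ∈ D →
    Pi (u ++ v ++ w) = Pi (u ++ [Pi v] ++ w)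
  inv_inv : ∀ x : L, inv (inv x) = x
  mem_inv : ∀ w ∈ D, (w.reverse.map inv) ++ w ∈ D
  Pi_inv : ∀ w ∈ D, Pi ((w.reverse.map inv) ++ w) = Pi []

namespace PartialGroupOn

variable {L : Type u} (M : PartialGroupOn L)

/-- The inverse of a word: reverse the word and invert each entry. -/
def wordInv (w : List L) : List L := w.reverse.map M.inv

/-- The identity element `1 = Π(∅)`. -/
def one : L := M.Pi []

/-- Conjugation `x ↦ x^g = Π(g⁻¹, x, g)`. -/
def conj (x g : L) : L := M.Pi [M.inv g, x, g]

/-- `D(g)` is the set of `x` for which `x^g` is defined. -/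
def Dg (g : L) : Set L := {x | [M.inv g, x, g] ∈ M.D}

/-- A partial subgroup: a nonempty subset closed under inversion and under the
product applied to words in `D` with entries in the subset. -/
def IsPartialSubgroup (H : Set L) : Prop :=
  H.Nonempty ∧ (∀ x ∈ H, M.inv x ∈ H) ∧
    ∀ w : List L, (∀ x ∈ w, x ∈ H) → w ∈ M.D → M.Pi w ∈ H

/-- A partial normal subgroup of `L`. -/
def IsPartialNormal (N : Set L) : Prop :=
  M.IsPartialSubgroup N ∧
    ∀ x ∈ N, ∀ g : L, [M.inv g, x, g] ∈ M.D → M.conj x g ∈ N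

/-- A subgroup of `L`: a partial subgroup `H` with `W(H) ⊆ D`. -/
def IsSubgroup (H : Set L) : Prop :=
  M.IsPartialSubgroup H ∧ ∀ w : List L, (∀ x ∈ w, x ∈ H) → w ∈ M.D

/-- `X ⊆ D(g)`, i.e. `X^g` is defined. -/
def setConjDef (X : Set L) (g : L) : Prop := ∀ x ∈ X, [M.inv g, x, g] ∈ M.D

/-- The conjugate set `X^g`. -/
def setConj (X : Set L) (g : L) : Set L := {y | ∃ x ∈ X, y = M.conj x g}

/-- `viaChain Δ w X` says that `w = (g₁,…,gₙ)` is in `D` via the chain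
`X = X₀, X₁ = X₀^{g₁}, …` of members of `Δ`. -/
def viaChain (Δ : Set (Set L)) : List L → Set L → Prop
  | [], X => X ∈ Δ
  | g :: w, X => X ∈ Δ ∧ M.setConjDef X g ∧ viaChain Δ w (M.setConj X g)

/-- `(L, Δ)` is an objective partial group: every member of `Δ` is a subgroup,
(O1) `D = D_Δ`, and (O2) the overgroup-closure condition. -/
def Objective (Δ : Set (Set L)) : Prop :=
  (∀ X ∈ Δ, M.IsSubgroup X) ∧
  (M.D = {w | ∃ X : Set L, M.viaChain Δ w X}) ∧
  (∀ X ∈ Δ, ∀ Y ∈ Δ, ∀ g : L, M.setConjDef X g → M.IsSubgroup (M.setConj X g) →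
    M.setConj X g ⊆ Y →
    ∀ Z : Set L, M.IsSubgroup Z → M.setConj X g ⊆ Z → Z ⊆ Y → Z ∈ Δ)

/-- The normalizer `N_L(X) = {g : X^g = X}`. -/
def normalizer (X : Set L) : Set L := {g | M.setConjDef X g ∧ M.setConj X g = X}

/-- `S_g = {x ∈ D(g) ∩ S : x^g ∈ S}`. -/
def Sg (S : Set L) (g : L) : Set L :=
  {x | x ∈ S ∧ [M.inv g, x, g] ∈ M.D ∧ M.conj x g ∈ S}

/-- `S_w`: the set of `x ∈ S` successively conjugated into `S` by the entries
of the word `w`. -/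
def Sw (S : Set L) : List L → Set L
  | [] => S
  | g :: w => {x | x ∈ S ∧ [M.inv g, x, g] ∈ M.D ∧ M.conj x g ∈ Sw S w}

/-- A `p`-subgroup: a subgroup whose cardinality is a power of `p`. -/
def IsPSubgroup (p : ℕ) (H : Set L) : Prop :=
  M.IsSubgroup H ∧ ∃ n : ℕ, Nat.card H = p ^ n

/-- `(L, Δ, S)` is a locality. -/
def IsLocality (p : ℕ) (Δ : Set (Set L)) (S : Set L) : Prop :=
  p.Prime ∧ Finite L ∧ S ∈ Δ ∧ (∀ X ∈ Δ, X ⊆ S) ∧ M.Objective Δ ∧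
    M.IsPSubgroup p S ∧
    ∀ H : Set L, M.IsPSubgroup p H → S ⊆ H → H = S

/-- The product set `XY` of two subsets of `L`. -/
def setProd (X Y : Set L) : Set L :=
  {z | ∃ a ∈ X, ∃ b ∈ Y, [a, b] ∈ M.D ∧ z = M.Pi [a, b]}

/-- A homomorphism of partial groups. -/
def IsHom {L' : Type u} (M' : PartialGroupOn L') (β : L → L') : Prop :=
  (∀ w ∈ M.D, w.map β ∈ M'.D) ∧ ∀ w ∈ M.D, β (M.Pi w) = M'.Pi (w.map β)

end PartialGroupOn

namespace PartialGroupOn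

variable {L : Type u} (M : PartialGroupOn L)

lemma Pi_append_one_append {u v : List L} (h : u ++ v ∈ M.D) :
    M.Pi (u ++ [M.one] ++ v) = M.Pi (u ++ v) := by
  simpa [one] using (M.Pi_assoc u [] v (by simpa using h)).symm

lemma Pi_inv_self (g : L) : M.Pi [M.inv g, g] = M.one := by
  simpa [one] using M.Pi_inv [g] (M.mem_single g)

lemma Pi_self_inv (g : L) : M.Pi [g, M.inv g] = M.one := by
  simpa [M.inv_inv] using M.Pi_inv_self (M.inv g)

lemma Pi_cons_cons_of_Pi_eq_one {a b : L} {v : List L} (h : a :: b :: v ∈ M.D)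
    (hab : M.Pi [a, b] = M.one) : M.Pi (a :: b :: v) = M.Pi v := by
  have hv : v ∈ M.D := M.mem_append_right [a, b] v h
  calc M.Pi (a :: b :: v) = M.Pi ([] ++ [M.Pi [a, b]] ++ v) := M.Pi_assoc [] [a, b] v h
    _ = M.Pi v := by rw [hab]; simpa using M.Pi_append_one_append (u := []) hv

lemma Pi_append_pair_of_Pi_eq_one {a b : L} {u : List L} (h : u ++ [a, b] ∈ M.D)
    (hab : M.Pi [a, b] = M.one) : M.Pi (u ++ [a, b]) = M.Pi u := by
  have hu : u ∈ M.D := M.mem_append_left u [a, b] h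
  calc M.Pi (u ++ [a, b]) = M.Pi (u ++ [M.Pi [a, b]] ++ []) := by
        simpa using M.Pi_assoc u [a, b] [] (by simpa using h)
    _ = M.Pi u := by rw [hab]; simpa using M.Pi_append_one_append (v := []) (by simpa using hu)

lemma pair_Pi_mem {u v : List L} (h : u ++ v ∈ M.D) :
    [M.Pi u, M.Pi v] ∈ M.D ∧ M.Pi [M.Pi u, M.Pi v] = M.Pi (u ++ v) := by
  have h1 : [M.Pi u] ++ v ++ [] ∈ M.D := by simpa using M.mem_assoc [] u v (by simpa using h)
  have e1 : M.Pi (u ++ v) = M.Pi ([M.Pi u] ++ v) := by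
    simpa using M.Pi_assoc [] u v (by simpa using h)
  refine ⟨by simpa using M.mem_assoc _ _ _ h1, ?_⟩
  rw [e1]
  simpa using (M.Pi_assoc _ _ _ h1).symm

lemma triple_Pi_mem {u v : List L} {x : L} (h : u ++ [x] ++ v ∈ M.D) :
    [M.Pi u, x, M.Pi v] ∈ M.D ∧ M.Pi [M.Pi u, x, M.Pi v] = M.Pi (u ++ [x] ++ v) := by
  have h1 : [] ++ [M.Pi u] ++ ([x] ++ v) ∈ M.D :=
    M.mem_assoc [] u ([x] ++ v) (by simpa using h)
  have e1 : M.Pi (u ++ [x] ++ v) = M.Pi ([] ++ [M.Pi u] ++ ([x] ++ v)) := by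
    simpa using M.Pi_assoc [] u ([x] ++ v) (by simpa using h)
  have h1' : [M.Pi u, x] ++ v ++ [] ∈ M.D := by simpa using h1
  refine ⟨by simpa using M.mem_assoc _ _ _ h1', ?_⟩
  rw [e1]
  simpa using (M.Pi_assoc _ _ _ h1').symm

lemma eq_inv_of_Pi_pair_eq_one {x y : L} (h : [x, y] ∈ M.D) (hxy : M.Pi [x, y] = M.one) :
    y = M.inv x := by
  have h3 : [M.inv x, x, y] ∈ M.D :=
    M.mem_append_right [M.inv y] _ (by simpa using M.mem_inv [x, y] h)
  calc y = M.Pi [M.inv x, x, y] := by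
        rw [M.Pi_cons_cons_of_Pi_eq_one h3 (M.Pi_inv_self x), M.Pi_single]
    _ = M.Pi ([M.inv x] ++ [M.one] ++ []) := by
        rw [← hxy]; simpa using M.Pi_assoc [M.inv x] [x, y] [] (by simpa using h3)
    _ = M.inv x := by
        rw [M.Pi_append_one_append (by simpa using M.mem_single _)]; simpa using M.Pi_single _

lemma Pi_wordInv {w : List L} (h : w ∈ M.D) : M.Pi (M.wordInv w) = M.inv (M.Pi w) := by
  have hm : M.wordInv w ++ w ∈ M.D := M.mem_inv w h
  obtain ⟨hmem, hPi⟩ := M.pair_Pi_mem hm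
  rw [M.eq_inv_of_Pi_pair_eq_one hmem (hPi.trans (M.Pi_inv w h)), M.inv_inv]

lemma conj_mem_Dg_inv_and_conj_conj_inv {g x : L} (h : x ∈ M.Dg g) :
    M.conj x g ∈ M.Dg (M.inv g) ∧ M.conj (M.conj x g) (M.inv g) = x := by
  -- With `w = (g⁻¹, x, g)`: `(g, g⁻¹, x, g, g⁻¹)` is a prefix of `u⁻¹ u`, where
  -- `u = (g⁻¹, x⁻¹, g, g⁻¹)` is a prefix of `w⁻¹ w`.
  have hA : [M.inv g, M.inv x, g] ++ [M.inv g, x, g] ∈ M.D := by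
    simpa [wordInv, M.inv_inv] using M.mem_inv _ h
  have hB := M.mem_inv _
    (M.mem_append_left [M.inv g, M.inv x, g, M.inv g] [x, g] (by simpa using hA))
  have hC : [g, M.inv g, x, g, M.inv g] ∈ M.D :=
    M.mem_append_left _ [M.inv x, g, M.inv g] (by simpa [M.inv_inv] using hB)
  have hCx : [x, g, M.inv g] ∈ M.D := M.mem_append_right [g, M.inv g] _ (by simpa using hC)
  simp only [Dg, conj, M.inv_inv]
  refine ⟨by simpa using M.mem_assoc [g] [M.inv g, x, g] [M.inv g] (by simpa using hC), ?_⟩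
  calc M.Pi [g, M.Pi [M.inv g, x, g], M.inv g] = M.Pi [g, M.inv g, x, g, M.inv g] := by
        simpa using (M.Pi_assoc [g] [M.inv g, x, g] [M.inv g] (by simpa using hC)).symm
    _ = M.Pi [x, g, M.inv g] := M.Pi_cons_cons_of_Pi_eq_one hC (M.Pi_self_inv g)
    _ = x := by
        rw [show [x, g, M.inv g] = [x] ++ [g, M.inv g] from rfl,
          M.Pi_append_pair_of_Pi_eq_one hCx (M.Pi_self_inv g), M.Pi_single]

variable {X : Set L}

def ConjSubset (X : Set L) (g : L) : Prop := M.setConjDef X g ∧ M.setConj X g ⊆ X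

lemma conj_mem_of_mem_normalizer {g x : L} (hg : g ∈ M.normalizer X) (hx : x ∈ X) :
    M.conj x g ∈ X :=
  hg.2 ▸ ⟨x, hx, rfl⟩

lemma mem_normalizer_iff {g : L} :
    g ∈ M.normalizer X ↔ M.ConjSubset X g ∧ M.ConjSubset X (M.inv g) := by
  constructor
  · intro hg
    refine ⟨⟨hg.1, hg.2.le⟩, fun y hy => ?_, ?_⟩
    · obtain ⟨x, hx, rfl⟩ := hg.2.ge hy
      exact (M.conj_mem_Dg_inv_and_conj_conj_inv (hg.1 x hx)).1
    · rintro - ⟨y, hy, rfl⟩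
      obtain ⟨x, hx, rfl⟩ := hg.2.ge hy
      rwa [(M.conj_mem_Dg_inv_and_conj_conj_inv (hg.1 x hx)).2]
  · rintro ⟨⟨hdef, hsub⟩, hdef', hsub'⟩
    refine ⟨hdef, hsub.antisymm fun x hx =>
      ⟨M.conj x (M.inv g), hsub' ⟨x, hx, rfl⟩, ?_⟩⟩
    simpa [M.inv_inv] using (M.conj_mem_Dg_inv_and_conj_conj_inv (hdef' x hx)).2.symm

lemma inv_mem_normalizer {g : L} (hg : g ∈ M.normalizer X) : M.inv g ∈ M.normalizer X := by
  rw [mem_normalizer_iff, M.inv_inv] at *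
  exact hg.symm

lemma conjSubset_of_mem {y : L} (hX : M.IsSubgroup X) (hy : y ∈ X) : M.ConjSubset X y := by
  have hword : ∀ x ∈ X, ∀ a ∈ [M.inv y, x, y], a ∈ X := by
    simp only [List.mem_cons, List.not_mem_nil, or_false]
    rintro x hx a (rfl | rfl | rfl) <;> first | exact hX.1.2.1 _ hy | assumption
  refine ⟨fun x hx => hX.2 _ (hword x hx), ?_⟩
  rintro - ⟨x, hx, rfl⟩
  exact hX.1.2.2 _ (hword x hx) (hX.2 _ (hword x hx))

lemma subset_normalizer (hX : M.IsSubgroup X) : X ⊆ M.normalizer X := fun y hy =>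
  (M.mem_normalizer_iff).2 ⟨M.conjSubset_of_mem hX hy, M.conjSubset_of_mem hX (hX.1.2.1 y hy)⟩

lemma conj_Pi_eq {w : List L} {x : L} (h : M.wordInv w ++ [x] ++ w ∈ M.D) :
    x ∈ M.Dg (M.Pi w) ∧ M.conj x (M.Pi w) = M.Pi (M.wordInv w ++ [x] ++ w) := by
  simp only [Dg, conj, ← M.Pi_wordInv (M.mem_append_right _ w h)]
  exact M.triple_Pi_mem h

lemma Pi_wordInv_append_mem {w : List L} (hw : ∀ g ∈ w, g ∈ M.normalizer X) {x : L}
    (hx : x ∈ X) (h : M.wordInv w ++ [x] ++ w ∈ M.D) :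
    M.Pi (M.wordInv w ++ [x] ++ w) ∈ X := by
  induction w generalizing x with
  | nil => simpa [wordInv, M.Pi_single] using hx
  | cons g u ih =>
    have hword : M.wordInv (g :: u) ++ [x] ++ g :: u
        = M.wordInv u ++ [M.inv g, x, g] ++ u := by simp [wordInv]
    rw [hword] at h ⊢
    rw [M.Pi_assoc _ _ _ h]
    exact ih (fun a ha => hw a (List.mem_cons_of_mem g ha))
      (M.conj_mem_of_mem_normalizer (hw g List.mem_cons_self) hx) (M.mem_assoc _ _ _ h)

lemma conjSubset_Pi {w : List L} (hw : ∀ g ∈ w, g ∈ M.normalizer X)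
    (hD : ∀ x ∈ X, M.wordInv w ++ [x] ++ w ∈ M.D) : M.ConjSubset X (M.Pi w) := by
  refine ⟨fun x hx => (M.conj_Pi_eq (hD x hx)).1, ?_⟩
  rintro - ⟨x, hx, rfl⟩
  rw [(M.conj_Pi_eq (hD x hx)).2]
  exact M.Pi_wordInv_append_mem hw hx (hD x hx)

lemma isSubgroup_normalizer (hX : M.IsSubgroup X)
    (hD : ∀ w : List L, (∀ g ∈ w, g ∈ M.normalizer X) → w ∈ M.D) :
    M.IsSubgroup (M.normalizer X) := by
  have hinv : ∀ w : List L, (∀ g ∈ w, g ∈ M.normalizer X) →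
      ∀ g ∈ M.wordInv w, g ∈ M.normalizer X := by
    simp only [wordInv, List.mem_map, List.mem_reverse]
    rintro w hw - ⟨g, hg, rfl⟩
    exact M.inv_mem_normalizer (hw g hg)
  have hconj : ∀ w : List L, (∀ g ∈ w, g ∈ M.normalizer X) → M.ConjSubset X (M.Pi w) := by
    refine fun w hw => M.conjSubset_Pi hw fun x hx => hD _ fun a ha => ?_
    simp only [List.mem_append, List.mem_singleton] at ha
    rcases ha with (ha | rfl) | ha
    exacts [hinv w hw a ha, M.subset_normalizer hX hx, hw a ha]
  refine ⟨⟨hX.1.1.mono (M.subset_normalizer hX), fun g => M.inv_mem_normalizer,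
    fun w hw _ => (M.mem_normalizer_iff).2 ⟨hconj w hw, ?_⟩⟩, hD⟩
  rw [← M.Pi_wordInv (hD w hw)]
  exact hconj _ (hinv w hw)

lemma viaChain_of_forall_mem_normalizer {Δ : Set (Set L)} (hX : X ∈ Δ) :
    ∀ w : List L, (∀ g ∈ w, g ∈ M.normalizer X) → M.viaChain Δ w X
  | [], _ => hX
  | g :: w, hw => by
    have hg := hw g List.mem_cons_self
    refine ⟨hX, hg.1, ?_⟩
    rw [hg.2]
    exact viaChain_of_forall_mem_normalizer hX w fun a ha => hw a (List.mem_cons_of_mem g ha)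

end PartialGroupOn

open PartialGroupOn

variable {L : Type u}

theorem normalizer_isSubgroup (M : PartialGroupOn L) (Δ : Set (Set L))
    (hobj : M.Objective Δ) (X : Set L) (hX : X ∈ Δ) :
    M.IsSubgroup (M.normalizer X) := by
  obtain ⟨hsub, hD, -⟩ := hobj
  refine M.isSubgroup_normalizer (hsub X hX) fun w hw => ?_
  rw [hD]
  exact ⟨X, M.viaChain_of_forall_mem_normalizer hX w hw⟩
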